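/- Let f : ℝ → ℝ be the polynomial map f(x) = x² − 2. Then the closure of the set {x ∈ ℝ : ∃ n ∈ ℕ, f^[n](x) = 0} (the union of all backward iterates of 0 under f) equals the interval [−2, 2]. -/

import Mathlib

/-! Outside `[-2, 2]` the map `x ↦ x² − 2` pushes `|x|` further out, so the backward orbit of `0`
stays in `[-2, 2]`. Inside, it is conjugate to angle doubling: `(2 cos θ)² − 2 = 2 cos 2θ`. Hence
the backward orbit contains `2 cos θ` for every `θ` with `cos (2ⁿ θ) = 0`, i.e. every odd multiple
of `π / 2ⁿ⁺¹`; these angles are dense in `ℝ` and `2 cos` maps `ℝ` onto `[-2, 2]`. -/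

open Real Set

theorem iterate_sq_sub_two_two_mul_cos (n : ℕ) (θ : ℝ) :
    (fun t : ℝ => t ^ 2 - 2)^[n] (2 * cos θ) = 2 * cos (2 ^ n * θ) := by
  induction n with
  | zero => simp
  | succ n ih =>
    rw [Function.iterate_succ_apply', ih, pow_succ' (2 : ℝ) n, mul_assoc, cos_two_mul]
    ring

theorem mapsTo_sq_sub_two_two_lt_abs :
    MapsTo (fun t : ℝ => t ^ 2 - 2) {x | 2 < |x|} {x | 2 < |x|} := by
  intro x (hx : 2 < |x|)
  have h4 : 4 < x ^ 2 := by nlinarith [sq_abs x]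
  show 2 < |x ^ 2 - 2|
  rw [abs_of_pos (by linarith)]
  linarith

theorem backward_orbit_sq_sub_two_subset_Icc :
    {x : ℝ | ∃ n : ℕ, (fun t : ℝ => t ^ 2 - 2)^[n] x = 0} ⊆ Icc (-2) 2 := by
  rintro x ⟨n, hn⟩
  rw [mem_Icc, ← abs_le]
  by_contra! hx
  have h : 2 < |(fun t : ℝ => t ^ 2 - 2)^[n] x| := mapsTo_sq_sub_two_two_lt_abs.iterate n hx
  rw [hn, abs_zero] at h
  linarith

theorem dense_setOf_cos_two_pow_mul_eq_zero : Dense {θ : ℝ | ∃ n : ℕ, cos (2 ^ n * θ) = 0} := by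
  rw [Metric.dense_iff]
  intro x r hr
  obtain ⟨n, hn⟩ := pow_unbounded_of_one_lt (π / r) one_lt_two
  have hstep : π / 2 ^ n < r := by
    rw [div_lt_iff₀ hr] at hn
    rw [div_lt_iff₀ (by positivity)]
    linarith
  -- the zeros of `cos (2 ^ n * ·)` are the points `(2 k + 1) π / 2 ^ (n + 1)`, spaced `π / 2 ^ n` apart
  set k : ℤ := round (2 ^ n * x / π - 1 / 2)
  refine ⟨(2 * k + 1) * π / 2 ^ (n + 1), ?_, n, ?_⟩
  · have hround := abs_sub_round (2 ^ n * x / π - 1 / 2)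
    have hdist : (2 * k + 1) * π / 2 ^ (n + 1) - x
        = -(π / 2 ^ n) * (2 ^ n * x / π - 1 / 2 - k) := by
      field_simp
      ring
    rw [Metric.mem_ball, Real.dist_eq, hdist, abs_mul, abs_neg, abs_of_pos (by positivity)]
    calc π / 2 ^ n * |2 ^ n * x / π - 1 / 2 - k| ≤ π / 2 ^ n * (1 / 2) := by gcongr
      _ < r := by linarith [show 0 < π / 2 ^ n by positivity]
  · exact cos_eq_zero_iff.mpr ⟨k, by field_simp; ring⟩

/-- The closure of the union of all backward iterates of `0` under `f(x) = x² − 2`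
equals the interval `[−2, 2]`. -/
theorem closure_backward_orbit_eq_Icc :
    closure {x : ℝ | ∃ n : ℕ, (fun t : ℝ => t ^ 2 - 2)^[n] x = 0} = Set.Icc (-2 : ℝ) 2 := by
  refine subset_antisymm (closure_minimal backward_orbit_sq_sub_two_subset_Icc isClosed_Icc) ?_
  intro y ⟨hy₁, hy₂⟩
  have hy : y = 2 * cos (arccos (y / 2)) := by
    rw [cos_arccos (by linarith) (by linarith)]
    ring
  have hcont : Continuous fun θ : ℝ => 2 * cos θ := by fun_prop
  refine closure_mono ?_
    (hcont.range_subset_closure_image_dense dense_setOf_cos_two_pow_mul_eq_zero ⟨_, hy.symm⟩)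
  rintro _ ⟨θ, ⟨n, hn⟩, rfl⟩
  exact ⟨n, by rw [iterate_sq_sub_two_two_mul_cos, hn, mul_zero]⟩
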